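/- If a topological group G contains a dense subgroup H with w(H) ≤ |H|, then w(G) ≤ |G|. -/

import Mathlib

/-!
A topological group is regular, so for a basis `B` of the dense subgroup `H` the sets
`interior (closure U)`, `U ∈ B`, `1 ∈ U`, form a neighbourhood base of `1` in `G`. Its translates
form a basis of `G` of cardinality at most `|G| · w(H) ≤ |G| · |G|`, which is `|G|` when `G` is
infinite. A finite space has the basis of minimal open neighbourhoods, one per point.
-/

open TopologicalSpace Cardinal

/-- The weight of a topological space: the minimal cardinality of a basis. -/
noncomputable def weight (X : Type*) [TopologicalSpace X] : Cardinal :=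
  ⨅ B : {B : Set (Set X) // IsTopologicalBasis B}, Cardinal.mk B.1

open Filter Topology

universe u

section Weight

variable {X : Type u} [TopologicalSpace X]

theorem TopologicalSpace.IsTopologicalBasis.weight_le_mk {B : Set (Set X)}
    (hB : IsTopologicalBasis B) : weight X ≤ #B :=
  ciInf_le' (fun B : {B : Set (Set X) // IsTopologicalBasis B} => #B.1) ⟨B, hB⟩

theorem exists_isTopologicalBasis_mk_eq_weight :
    ∃ B : Set (Set X), IsTopologicalBasis B ∧ #B = weight X := by
  have : Nonempty {B : Set (Set X) // IsTopologicalBasis B} := ⟨⟨_, isTopologicalBasis_opens⟩⟩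
  obtain ⟨⟨B, hB⟩, hBw⟩ := csInf_mem (Set.range_nonempty
    fun B : {B : Set (Set X) // IsTopologicalBasis B} => #B.1)
  exact ⟨B, hB, hBw⟩

theorem weight_le_sum_of_hasBasis_nhds {ι : X → Type u} {p : ∀ x, ι x → Prop}
    {s : ∀ x, ι x → Set X} (hs : ∀ x i, IsOpen (s x i)) (h : ∀ x, (𝓝 x).HasBasis (p x) (s x)) :
    weight X ≤ sum fun x => #{i // p x i} := by
  have hB : IsTopologicalBasis (Set.range fun a : Σ x, {i // p x i} => s a.1 a.2) := by
    refine isTopologicalBasis_of_isOpen_of_nhds (by rintro _ ⟨a, rfl⟩; exact hs _ _) ?_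
    intro x u hxu hu
    obtain ⟨i, hi, hiu⟩ := (h x).mem_iff.mp (hu.mem_nhds hxu)
    exact ⟨s x i, ⟨⟨x, i, hi⟩, rfl⟩, mem_of_mem_nhds ((h x).mem_of_mem hi), hiu⟩
  calc weight X ≤ _ := hB.weight_le_mk
    _ ≤ #(Σ x, {i // p x i}) := mk_range_le
    _ = _ := mk_sigma _

theorem AlexandrovDiscrete.weight_le_mk [AlexandrovDiscrete X] : weight X ≤ #X := by
  have hB : IsTopologicalBasis (Set.range fun x : X => nhdsKer {x}) := by
    refine isTopologicalBasis_of_isOpen_of_nhds (by rintro _ ⟨x, rfl⟩; exact isOpen_nhdsKer) ?_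
    intro x u hxu hu
    exact ⟨nhdsKer {x}, ⟨x, rfl⟩, subset_nhdsKer (Set.mem_singleton x),
      nhdsKer_singleton_subset_iff_mem_nhds.mpr (hu.mem_nhds hxu)⟩
  exact hB.weight_le_mk.trans mk_range_le

theorem Dense.hasBasis_nhds_interior_closure [RegularSpace X] {D : Set X} (hD : Dense D)
    {B : Set (Set D)} (hB : IsTopologicalBasis B) (x : D) :
    (𝓝 (x : X)).HasBasis (fun U => U ∈ B ∧ x ∈ U)
      (fun U => interior (closure (Subtype.val '' U))) := by
  refine ⟨fun t => ⟨fun ht => ?_, fun ⟨U, ⟨hUB, hxU⟩, hUt⟩ => ?_⟩⟩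
  · obtain ⟨C, ⟨hC, hCclosed⟩, hCt⟩ := (closed_nhds_basis (x : X)).mem_iff.mp ht
    obtain ⟨U, hUB, hxU, hUC⟩ :=
      hB.mem_nhds_iff.mp (continuous_subtype_val.continuousAt.preimage_mem_nhds hC)
    have hclosure : closure (Subtype.val '' U) ⊆ C :=
      hCclosed.closure_subset_iff.mpr (Set.image_subset_iff.mpr hUC)
    exact ⟨U, ⟨hUB, hxU⟩, interior_subset.trans (hclosure.trans hCt)⟩
  · obtain ⟨V, hV, rfl⟩ := isOpen_induced_iff.mp (hB.isOpen hUB)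
    have hVsub : V ⊆ interior (closure (Subtype.val '' (Subtype.val ⁻¹' V : Set D))) := by
      rw [Subtype.image_preimage_coe, Set.inter_comm]
      exact interior_maximal (hD.open_subset_closure_inter hV) hV
    exact mem_of_superset (hV.mem_nhds hxU) (hVsub.trans hUt)

end Weight

theorem IsTopologicalGroup.weight_le_mul_of_hasBasis_nhds_one {G : Type u} [Group G]
    [TopologicalSpace G] [IsTopologicalGroup G] {ι : Type u} {p : ι → Prop} {s : ι → Set G}
    (hs : ∀ i, IsOpen (s i)) (h : (𝓝 (1 : G)).HasBasis p s) :
    weight G ≤ #G * #{i // p i} := by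
  calc weight G ≤ sum fun _ : G => #{i // p i} :=
        weight_le_sum_of_hasBasis_nhds (fun x i => (hs i).preimage (continuous_div_right' x))
          h.nhds_of_one
    _ = _ := sum_const' _ _

theorem weight_le_mk_of_denseSubgroup {G : Type*} [Group G] [TopologicalSpace G]
    [IsTopologicalGroup G] (H : Subgroup G) (hdense : Dense (H : Set G))
    (hH : weight H ≤ Cardinal.mk H) : weight G ≤ Cardinal.mk G := by
  rcases finite_or_infinite G with hfin | hinf
  · exact AlexandrovDiscrete.weight_le_mk
  obtain ⟨B, hB, hBw⟩ := exists_isTopologicalBasis_mk_eq_weight (X := H)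
  have hbasis := hdense.hasBasis_nhds_interior_closure hB 1
  calc weight G ≤ #G * #{U // U ∈ B ∧ (1 : H) ∈ U} :=
        IsTopologicalGroup.weight_le_mul_of_hasBasis_nhds_one (fun _ => isOpen_interior) hbasis
    _ ≤ #G * #G := by
        gcongr
        calc #{U // U ∈ B ∧ (1 : H) ∈ U} ≤ #B := mk_le_mk_of_subset fun _ hU => hU.1
          _ ≤ #H := hBw ▸ hH
          _ ≤ #G := mk_le_of_injective Subtype.val_injective
    _ = #G := mul_eq_self (aleph0_le_mk G)
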